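/- Let Φ : (0,1) → (0,∞) be a function such that φ(x) := x^{−Φ(x)} is nonincreasing and left-continuous on (0,1), and suppose limsup_{x→0+} Φ(x) = 0. Then ℙ({ x ∈ Δ^{Words} : limsup_{m→∞} (log₂ H_{m,Φ}(x))/m < ∞ }) = 0; that is, for ℙ-almost every x, limsup_{m→∞} (log₂ H_{m,Φ}(x))/m = ∞. -/

import Mathlib

open MeasureTheory Filter Set
open scoped ENNReal NNReal

/-- The alphabet `Λ = {0,1}^d`, identified with `{0,…,2^d−1}`. -/
abbrev Lam (d : ℕ) := Fin d → Bool

/-- Finite words over the alphabet `Λ` (including the empty word). -/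
abbrev Wd (d : ℕ) := List (Lam d)

/-- The ambient space `ℝ^{2^d}` (with the Euclidean metric), coordinates indexed by `Λ`. -/
abbrev Pt (d : ℕ) := EuclideanSpace ℝ (Lam d)

/-- The simplex `Δ = {x : x_a ≥ 0, Σ_a x_a = 1}` in `ℝ^{2^d}`. -/
def simplexSet (d : ℕ) : Set (Pt d) := {p | (∀ a, 0 ≤ p a) ∧ (∑ a, p a) = 1}

/-- The uniform probability distribution `σ` on the simplex: the normalized restriction to
`Δ` of the `(2^d − 1)`-dimensional Hausdorff measure on `ℝ^{2^d}`. -/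
noncomputable def sigmaMeas (d : ℕ) : Measure (Pt d) :=
  ((Measure.hausdorffMeasure ((2 ^ d : ℝ) - 1) : Measure (Pt d)) (simplexSet d))⁻¹ •
    ((Measure.hausdorffMeasure ((2 ^ d : ℝ) - 1) : Measure (Pt d)).restrict (simplexSet d))

/-- Auxiliary recursion for labels: `labelFrom d x pre w` is the product, over the letters of
`w`, of the coordinates of `x` along the path starting at the node `pre`. -/
noncomputable def labelFrom (d : ℕ) (x : Wd d → Pt d) : Wd d → Wd d → ℝ
  | _, [] => 1
  | pre, a :: w => x pre a * labelFrom d x (pre ++ [a]) w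

/-- The label `L(x,w) = Π_{j=1}^{k} x(w_1⋯w_{j−1})_{w_j}` of the word `w` (empty word ↦ 1). -/
noncomputable def label (d : ℕ) (x : Wd d → Pt d) (w : Wd d) : ℝ := labelFrom d x [] w

/-- A word `w = w_1⋯w_m` is central if for each coordinate `i` the digit string
`(w_1(i),…,w_m(i))` equals `(0,1,1,…,1)` or `(1,0,0,…,0)`. -/
def IsCentral (d : ℕ) (w : Wd d) : Prop :=
  ∀ i : Fin d, ∃ b : Bool, w.map (fun a => a i) = b :: List.replicate (w.length - 1) (!b)

/-- The ratio `L(x,ω)/L(x,ωw)`, with the convention that a zero denominator gives `∞`. -/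
noncomputable def ratio (d : ℕ) (x : Wd d → Pt d) (ω w : Wd d) : ℝ≥0∞ :=
  if label d x (ω ++ w) = 0 then ⊤ else ENNReal.ofReal (label d x ω / label d x (ω ++ w))

/-- `H_{m,Φ}(x)`: sup over words `ω` (of length ≥ 1) with `φ(2^{−|ω|}) < 2^m`, where
`φ(x) = x^{−Φ(x)}`, of the min over central words `w` of length `m` of `L(x,ω)/L(x,ωw)`;
the sup over the empty collection is 1. -/
noncomputable def HmPhi (d : ℕ) (x : Wd d → Pt d) (Φ : ℝ → ℝ) (m : ℕ) : ℝ≥0∞ :=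
  1 ⊔ ⨆ (ω : Wd d) (_ : 1 ≤ ω.length ∧
      ((2 : ℝ) ^ (-(ω.length : ℝ))) ^ (-Φ ((2 : ℝ) ^ (-(ω.length : ℝ)))) < (2 : ℝ) ^ m),
    ⨅ (w : Wd d) (_ : w.length = m ∧ IsCentral d w), ratio d x ω w

/-- Base-2 logarithm on `ℝ≥0∞` (with `log₂ ∞ = ∞`). -/
noncomputable def log2 (y : ℝ≥0∞) : ℝ≥0∞ :=
  if y = ⊤ then ⊤ else ENNReal.ofReal (Real.logb 2 y.toReal)

/-!
Fix `K`. Call `x` `δ`-steep at a node `ω` if `x(ωb)_{bᶜ} ≤ δ` for every letter `b`. Every central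
word of length `m ≥ 2` starts with some `b bᶜ`, so at a steep node all ratios
`L(x,ω)/L(x,ωw)` over central `w` are at least `1/δ`; with `δ = 2^{-Km}` this gives
`H_{m,Φ}(x) ≥ 2^{Km}` once `φ(2^{-|ω|}) < 2^m`.

Each coordinate of `σ` satisfies `σ{p_a ≤ δ} ≳ δ^{2ᵈ-1}` (compare the Hausdorff measure of the
simplex with Lebesgue measure in a chart), so a node is steep with probability `2^{-O(Km)}`,
and the steepness events of distinct nodes are independent. By the second moment method
some node at a depth `ℓ = O(m)` is steep outside an event of probability `2^{-m}`, and
Borel–Cantelli makes this hold for all large `m` almost surely. Finally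
`φ(2^{-ℓ}) = 2^{ℓ Φ(2^{-ℓ})} < 2^m` for `ℓ = O(m)` and large `m` because `Φ → 0` at `0⁺`.
Letting `K → ∞` gives `limsup_m log₂ H_{m,Φ}(x) / m = ∞`.
-/

open Topology

section Simplex

variable {d : ℕ}

lemma isClosed_simplexSet : IsClosed (simplexSet d) := by
  simp only [simplexSet, Set.ofPred_and, Set.ofPred_forall]
  exact (isClosed_iInter fun a => isClosed_le continuous_const (by fun_prop)).inter
    (isClosed_eq (by fun_prop) continuous_const)

lemma apply_le_one_of_mem_simplexSet {p : Pt d} (hp : p ∈ simplexSet d) (a : Lam d) :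
    p a ≤ 1 :=
  hp.2 ▸ Finset.single_le_sum (fun a _ => hp.1 a) (Finset.mem_univ a)

lemma measurableSet_coord_le (a : Lam d) (δ : ℝ) : MeasurableSet {p : Pt d | p a ≤ δ} :=
  (isClosed_le (by fun_prop) continuous_const).measurableSet

lemma two_pow_sub_one_nonneg : (0 : ℝ) ≤ 2 ^ d - 1 := by
  linarith [one_le_pow₀ (M₀ := ℝ) (n := d) one_le_two]

lemma card_subtype_ne (b : Lam d) : Fintype.card {a // a ≠ b} = 2 ^ d - 1 := by
  simp [Fintype.card_subtype_compl]

lemma cast_card_subtype_ne (b : Lam d) : (Fintype.card {a // a ≠ b} : ℝ) = 2 ^ d - 1 := by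
  rw [card_subtype_ne, Nat.cast_sub Nat.one_le_two_pow]
  norm_num

lemma two_pow_sub_one_pos (hd : 1 ≤ d) : (0 : ℝ) < (2 ^ d - 1 : ℕ) := by
  have : 2 ≤ 2 ^ d := Nat.le_self_pow (by omega) 2
  exact_mod_cast (by omega : 0 < 2 ^ d - 1)

lemma ofReal_inv_two_pow_sub_one_pos (hd : 1 ≤ d) :
    0 < ENNReal.ofReal (1 / (2 ^ d - 1 : ℕ)) ^ (2 ^ d - 1) :=
  ENNReal.pow_pos (ENNReal.ofReal_pos.2 (one_div_pos.2 (two_pow_sub_one_pos hd))) _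

lemma hausdorffMeasure_eq_volume (b : Lam d) :
    (μH[(2 ^ d : ℝ) - 1] : Measure ({a // a ≠ b} → ℝ)) = volume := by
  rw [← cast_card_subtype_ne b, hausdorffMeasure_pi_real]

def chart (b : Lam d) (p : Pt d) : {a // a ≠ b} → ℝ := fun a => p a

noncomputable def chartInv (b : Lam d) (y : {a // a ≠ b} → ℝ) : Pt d :=
  WithLp.toLp 2 fun a => if h : a = b then 1 - ∑ i, y i else y ⟨a, h⟩

lemma chartInv_apply_self (b : Lam d) (y : {a // a ≠ b} → ℝ) :
    chartInv b y b = 1 - ∑ i, y i := by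
  simp [chartInv]

lemma chartInv_apply_of_ne (b : Lam d) (y : {a // a ≠ b} → ℝ) (a : {a // a ≠ b}) :
    chartInv b y a = y a := by
  simp [chartInv, a.2]

lemma sum_chartInv (b : Lam d) (y : {a // a ≠ b} → ℝ) : ∑ a, chartInv b y a = 1 := by
  classical
  rw [Fintype.sum_eq_add_sum_subtype_ne _ b, chartInv_apply_self]
  simp only [chartInv_apply_of_ne]
  ring

lemma chart_chartInv (b : Lam d) (y : {a // a ≠ b} → ℝ) : chart b (chartInv b y) = y :=
  funext (chartInv_apply_of_ne b y)

lemma chartInv_chart (b : Lam d) {p : Pt d} (hp : ∑ a, p a = 1) :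
    chartInv b (chart b p) = p := by
  classical
  ext a
  by_cases h : a = b
  · subst h
    rw [chartInv_apply_self, ← hp, Fintype.sum_eq_add_sum_subtype_ne _ a]
    simp [chart]
  · exact chartInv_apply_of_ne b _ ⟨a, h⟩

lemma lipschitzWith_chart (b : Lam d) : LipschitzWith 1 (chart b) :=
  LipschitzWith.of_dist_le_mul fun p q => by
    rw [NNReal.coe_one, one_mul, dist_pi_le_iff dist_nonneg]
    exact fun a => (dist_le_pi_dist (WithLp.ofLp p) (WithLp.ofLp q) a).trans
      (by simpa using (PiLp.lipschitzWith_ofLp 2 _).dist_le_mul p q)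

lemma exists_lipschitzWith_chartInv (b : Lam d) : ∃ K, LipschitzWith K (chartInv b) := by
  let L : ({a // a ≠ b} → ℝ) →ₗ[ℝ] Pt d :=
    (WithLp.linearEquiv 2 ℝ (Lam d → ℝ)).symm.toLinearMap ∘ₗ
      LinearMap.pi fun a => if h : a = b then -∑ i, LinearMap.proj i else LinearMap.proj ⟨a, h⟩
  let A : ({a // a ≠ b} → ℝ) →ᵃ[ℝ] Pt d := L.toAffineMap + AffineMap.const ℝ _ (chartInv b 0)
  have hA : ⇑A = chartInv b := by
    funext y
    ext a
    by_cases h : a = b <;> simp [A, L, chartInv, h, sub_eq_neg_add]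
  exact hA ▸ A.lipschitzWith_of_finiteDimensional

lemma simplexSet_subset_image_chartInv (b : Lam d) :
    simplexSet d ⊆ chartInv b '' Set.univ.pi fun _ => Set.Icc 0 1 :=
  fun p hp => ⟨chart b p, fun a _ => ⟨hp.1 a, apply_le_one_of_mem_simplexSet hp a⟩,
    chartInv_chart b hp.2⟩

lemma hausdorffMeasure_simplexSet_lt_top : μH[(2 ^ d : ℝ) - 1] (simplexSet d) < ⊤ := by
  obtain ⟨K, hK⟩ := exists_lipschitzWith_chartInv (default : Lam d)
  refine (measure_mono (simplexSet_subset_image_chartInv default)).trans_lt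
    ((hK.hausdorffMeasure_image_le two_pow_sub_one_nonneg _).trans_lt ?_)
  rw [hausdorffMeasure_eq_volume, volume_pi_pi]
  exact ENNReal.mul_lt_top (ENNReal.rpow_lt_top_of_nonneg two_pow_sub_one_nonneg
    ENNReal.coe_ne_top)
    (ENNReal.prod_lt_top fun _ _ => by simp)

lemma pi_Icc_subset_image_chart (hd : 1 ≤ d) (b : Lam d) {δ : ℝ} (hδ : δ ≤ 1) :
    (Set.univ.pi fun _ => Set.Icc ((1 - δ) / (2 ^ d - 1 : ℕ)) (1 / (2 ^ d - 1 : ℕ))) ⊆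
      chart b '' (simplexSet d ∩ {p | p b ≤ δ}) := by
  intro y hy
  have hk := two_pow_sub_one_pos hd
  have hsum : 1 - δ ≤ ∑ i, y i ∧ ∑ i, y i ≤ 1 := by
    have h := Finset.sum_le_sum fun i (_ : i ∈ Finset.univ) => (hy i trivial).1
    have h' := Finset.sum_le_sum fun i (_ : i ∈ Finset.univ) => (hy i trivial).2
    simp only [Finset.sum_const, Finset.card_univ, card_subtype_ne, nsmul_eq_mul] at h h'
    rw [mul_div_cancel₀ _ hk.ne'] at h
    rw [mul_one_div_cancel hk.ne'] at h'
    exact ⟨h, h'⟩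
  refine ⟨chartInv b y, ⟨⟨fun a => ?_, sum_chartInv b y⟩, ?_⟩, chart_chartInv b y⟩
  · by_cases h : a = b
    · rw [h, chartInv_apply_self]; linarith
    · rw [show a = (⟨a, h⟩ : {a // a ≠ b}) from rfl, chartInv_apply_of_ne]
      exact (div_nonneg (by linarith) hk.le).trans (hy _ trivial).1
  · show chartInv b y b ≤ δ
    rw [chartInv_apply_self]; linarith

lemma ofReal_le_hausdorffMeasure_simplexSet_inter (hd : 1 ≤ d) (b : Lam d) {δ : ℝ}
    (hδ : δ ≤ 1) :
    ENNReal.ofReal (1 / (2 ^ d - 1 : ℕ)) ^ (2 ^ d - 1) * ENNReal.ofReal δ ^ (2 ^ d - 1) ≤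
      μH[(2 ^ d : ℝ) - 1] (simplexSet d ∩ {p | p b ≤ δ}) := by
  have h := (measure_mono (pi_Icc_subset_image_chart hd b hδ)).trans
    ((lipschitzWith_chart b).hausdorffMeasure_image_le (two_pow_sub_one_nonneg (d := d)) _)
  rw [hausdorffMeasure_eq_volume, volume_pi_pi] at h
  simp only [Real.volume_Icc, Finset.prod_const, Finset.card_univ, ENNReal.coe_one,
    ENNReal.one_rpow, one_mul, card_subtype_ne] at h
  refine le_of_eq_of_le ?_ h
  rw [← mul_pow, ← ENNReal.ofReal_mul (by positivity)]
  congr 2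
  ring

lemma hausdorffMeasure_simplexSet_pos (hd : 1 ≤ d) : 0 < μH[(2 ^ d : ℝ) - 1] (simplexSet d) :=
  (ofReal_inv_two_pow_sub_one_pos hd).trans_le <| by
    simpa using (ofReal_le_hausdorffMeasure_simplexSet_inter hd default le_rfl).trans
      (measure_mono Set.inter_subset_left)

lemma sigmaMeas_apply {s : Set (Pt d)} (hs : MeasurableSet s) :
    sigmaMeas d s = (μH[(2 ^ d : ℝ) - 1] (simplexSet d))⁻¹ *
      μH[(2 ^ d : ℝ) - 1] (s ∩ simplexSet d) := by
  rw [sigmaMeas, Measure.smul_apply, smul_eq_mul, Measure.restrict_apply hs]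

lemma isProbabilityMeasure_sigmaMeas (hd : 1 ≤ d) : IsProbabilityMeasure (sigmaMeas d) :=
  ⟨by rw [sigmaMeas_apply MeasurableSet.univ, Set.univ_inter, ENNReal.inv_mul_cancel
    (hausdorffMeasure_simplexSet_pos hd).ne' hausdorffMeasure_simplexSet_lt_top.ne]⟩

lemma sigmaMeas_compl_simplexSet : sigmaMeas d (simplexSet d)ᶜ = 0 := by
  rw [sigmaMeas_apply isClosed_simplexSet.measurableSet.compl, Set.compl_inter_self,
    measure_empty, mul_zero]

lemma exists_inv_two_pow_mul_le_sigmaMeas (hd : 1 ≤ d) : ∃ c : ℕ, ∀ (b : Lam d) {δ : ℝ},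
    δ ≤ 1 → 2⁻¹ ^ c * ENNReal.ofReal δ ^ (2 ^ d - 1) ≤ sigmaMeas d {p | p b ≤ δ} := by
  obtain ⟨c, hc⟩ := ENNReal.exists_inv_two_pow_lt (a := (μH[(2 ^ d : ℝ) - 1] (simplexSet d))⁻¹ *
    ENNReal.ofReal (1 / (2 ^ d - 1 : ℕ)) ^ (2 ^ d - 1))
    (mul_ne_zero (ENNReal.inv_ne_zero.2 hausdorffMeasure_simplexSet_lt_top.ne)
      (ofReal_inv_two_pow_sub_one_pos hd).ne')
  refine ⟨c, fun b δ hδ => ?_⟩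
  rw [sigmaMeas_apply (measurableSet_coord_le b δ), Set.inter_comm]
  calc 2⁻¹ ^ c * ENNReal.ofReal δ ^ (2 ^ d - 1)
      ≤ (μH[(2 ^ d : ℝ) - 1] (simplexSet d))⁻¹ *
          ENNReal.ofReal (1 / (2 ^ d - 1 : ℕ)) ^ (2 ^ d - 1) * ENNReal.ofReal δ ^ (2 ^ d - 1) :=
        mul_le_mul_left hc.le _
    _ ≤ _ := by
        rw [mul_assoc]
        exact mul_le_mul_right (ofReal_le_hausdorffMeasure_simplexSet_inter hd b hδ) _

end Simplex

lemma two_mul_le_add_sq_of_ne_top {u v : ℝ≥0∞} (hu : u ≠ ⊤) (hv : v ≠ ⊤) :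
    2 * u * v ≤ u ^ 2 + v ^ 2 := by
  lift u to ℝ≥0 using hu
  lift v to ℝ≥0 using hv
  exact_mod_cast two_mul_le_add_sq u v

section SecondMoment

variable {Ω ι : Type*} [MeasurableSpace Ω] {μ : Measure Ω} [Fintype ι] {B : ι → Set Ω}
  {ρ : ℝ≥0∞}

lemma lintegral_sum_indicator_one (hB : ∀ i, MeasurableSet (B i)) (hρ : ∀ i, μ (B i) = ρ) :
    ∫⁻ ω, ∑ i, (B i).indicator 1 ω ∂μ = Fintype.card ι * ρ := by
  rw [lintegral_finsetSum _ fun i _ => measurable_one.indicator (hB i)]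
  simp [lintegral_indicator_one (hB _), hρ]

lemma lintegral_sum_indicator_one_sq_le (hB : ∀ i, MeasurableSet (B i)) (hρ : ∀ i, μ (B i) = ρ)
    (hindep : Pairwise fun i j => μ (B i ∩ B j) = ρ * ρ) :
    ∫⁻ ω, (∑ i, (B i).indicator 1 ω) ^ 2 ∂μ ≤
      Fintype.card ι * ρ + (Fintype.card ι * ρ) ^ 2 := by
  classical
  have hinter : ∀ i j ω, (B i).indicator (1 : Ω → ℝ≥0∞) ω * (B j).indicator 1 ω =
      (B i ∩ B j).indicator 1 ω := fun i j ω => by rw [Set.inter_indicator_one]; rfl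
  have hmeas : ∀ i j, Measurable ((B i ∩ B j).indicator (1 : Ω → ℝ≥0∞)) :=
    fun i j => measurable_one.indicator ((hB i).inter (hB j))
  calc ∫⁻ ω, (∑ i, (B i).indicator 1 ω) ^ 2 ∂μ = ∑ i, ∑ j, μ (B i ∩ B j) := by
        simp_rw [sq, Finset.sum_mul_sum, hinter]
        rw [lintegral_finsetSum _ fun i _ => Finset.measurable_sum _ fun j _ => hmeas i j]
        refine Finset.sum_congr rfl fun i _ => ?_
        rw [lintegral_finsetSum _ fun j _ => hmeas i j]
        exact Finset.sum_congr rfl fun j _ => lintegral_indicator_one ((hB i).inter (hB j))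
    _ ≤ ∑ _i : ι, (ρ + Fintype.card ι * (ρ * ρ)) := by
        refine Finset.sum_le_sum fun i _ => ?_
        rw [Fintype.sum_eq_add_sum_compl i, Set.inter_self, hρ]
        gcongr
        calc ∑ j ∈ {i}ᶜ, μ (B i ∩ B j) = ∑ j ∈ ({i}ᶜ : Finset ι), ρ * ρ :=
              Finset.sum_congr rfl fun j hj => hindep (by simpa [eq_comm] using hj)
          _ ≤ _ := by
              rw [Finset.sum_const, nsmul_eq_mul]
              gcongr
              exact_mod_cast Finset.card_le_univ _
    _ = _ := by simp; ring

lemma measure_compl_iUnion_le_of_pairwise_indep [IsProbabilityMeasure μ]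
    (hB : ∀ i, MeasurableSet (B i)) (hρ : ∀ i, μ (B i) = ρ)
    (hindep : Pairwise fun i j => μ (B i ∩ B j) = ρ * ρ) :
    μ (⋃ i, B i)ᶜ ≤ (Fintype.card ι * ρ)⁻¹ := by
  set a : ℝ≥0∞ := Fintype.card ι * ρ
  set U := ⋃ i, B i
  rcases eq_or_ne a 0 with ha0 | ha0
  · simp [ha0]
  obtain ⟨i₀⟩ : Nonempty ι := by
    by_contra h
    simp [a, Fintype.card_eq_zero_iff.2 (not_nonempty_iff.1 h)] at ha0
  have ha : a ≠ ⊤ := ENNReal.mul_ne_top (ENNReal.natCast_ne_top _)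
    ((hρ i₀) ▸ prob_le_one.trans_lt ENNReal.one_lt_top).ne
  let Z : Ω → ℝ≥0∞ := fun ω => ∑ i, (B i).indicator 1 ω
  have hZ : Measurable Z := Finset.measurable_sum _ fun i _ => measurable_one.indicator (hB i)
  have hZ_ne_top : ∀ ω, Z ω ≠ ⊤ := fun ω => ENNReal.sum_ne_top.2 fun i _ =>
    (Set.indicator_le_self' (fun _ _ => zero_le_one) ω).trans_lt ENNReal.one_lt_top |>.ne
  -- On `Uᶜ` the count `Z` vanishes; on `U` this is AM-GM.
  have hpointwise : ∀ ω, a ^ 2 * Uᶜ.indicator 1 ω + 2 * a * Z ω ≤ Z ω ^ 2 + a ^ 2 := by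
    intro ω
    by_cases hω : ω ∈ U
    · simpa [hω, add_comm] using two_mul_le_add_sq_of_ne_top ha (hZ_ne_top ω)
    · have : Z ω = 0 := Finset.sum_eq_zero fun i _ =>
        Set.indicator_of_notMem (fun hi => hω (Set.mem_iUnion_of_mem i hi)) _
      simp [hω, this]
  have hU : MeasurableSet Uᶜ := (MeasurableSet.iUnion hB).compl
  have key : a ^ 2 * μ Uᶜ + 2 * a ^ 2 ≤ a + 2 * a ^ 2 :=
    calc a ^ 2 * μ Uᶜ + 2 * a ^ 2
        = ∫⁻ ω, a ^ 2 * Uᶜ.indicator 1 ω + 2 * a * Z ω ∂μ := by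
          rw [lintegral_add_left ((measurable_one.indicator hU).const_mul _),
            lintegral_const_mul _ (measurable_one.indicator hU), lintegral_indicator_one hU,
            lintegral_const_mul _ hZ, lintegral_sum_indicator_one hB hρ]
          ring
      _ ≤ ∫⁻ ω, Z ω ^ 2 + a ^ 2 ∂μ := lintegral_mono hpointwise
      _ ≤ a + a ^ 2 + a ^ 2 := by
          rw [lintegral_add_right _ measurable_const, lintegral_const, measure_univ, mul_one]
          gcongr
          exact lintegral_sum_indicator_one_sq_le hB hρ hindep
      _ = a + 2 * a ^ 2 := by ring
  have hmul : a * (a * μ Uᶜ) ≤ a * 1 := by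
    rw [← mul_assoc, ← sq, mul_one]
    exact (ENNReal.add_le_add_iff_right (by finiteness)).1 key
  exact ENNReal.le_inv_iff_mul_le.2 (by
    rw [mul_comm]; exact (ENNReal.mul_le_mul_iff_right ha0 ha).1 hmul)

end SecondMoment

section RandomTree

variable {d : ℕ} {P : Measure (Wd d → Pt d)}

def HasIidSimplexCoords (P : Measure (Wd d → Pt d)) : Prop :=
  ∀ F : Finset (Wd d), P.map (fun x (w : F) => x (w : Wd d)) = Measure.pi fun _ : F => sigmaMeas d

lemma measure_setOf_forall_apply_mem (hd : 1 ≤ d) (hP : HasIidSimplexCoords P)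
    {ι : Type*} [Fintype ι] {node : ι → Wd d} (hnode : Function.Injective node)
    {S : ι → Set (Pt d)} (hS : ∀ i, MeasurableSet (S i)) :
    P {x | ∀ i, x (node i) ∈ S i} = ∏ i, sigmaMeas d (S i) := by
  classical
  have := isProbabilityMeasure_sigmaMeas hd
  let F := Finset.univ.image node
  let e : ι ≃ F := Equiv.ofBijective (fun i => ⟨node i, Finset.mem_image_of_mem _ (by simp)⟩)
    ⟨fun i j h => hnode (congrArg Subtype.val h), fun w => by
      obtain ⟨i, -, hi⟩ := Finset.mem_image.1 w.2
      exact ⟨i, Subtype.ext hi⟩⟩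
  have hset : {x : Wd d → Pt d | ∀ i, x (node i) ∈ S i} =
      (fun x (w : F) => x (w : Wd d)) ⁻¹' Set.univ.pi fun w => S (e.symm w) := by
    ext x
    have he : ∀ i, (e i : Wd d) = node i := fun i => rfl
    simp only [Set.mem_ofPred_eq, Set.mem_preimage, Set.mem_univ_pi]
    refine ⟨fun h w => ?_, fun h i => ?_⟩
    · simpa only [← he, e.apply_symm_apply] using h (e.symm w)
    · simpa only [e.symm_apply_apply, he] using h (e i)
  have hproj : Measurable fun (x : Wd d → Pt d) (w : F) => x w :=
    measurable_pi_lambda _ fun w => measurable_pi_apply _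
  rw [hset, ← Measure.map_apply (μ := P) hproj (MeasurableSet.univ_pi fun w => hS _), hP,
    Measure.pi_pi]
  exact e.symm.prod_comp fun i => sigmaMeas d (S i)

lemma ae_mem_simplexSet (hd : 1 ≤ d) (hP : HasIidSimplexCoords P) :
    ∀ᵐ x ∂P, ∀ w, x w ∈ simplexSet d := by
  refine ae_all_iff.2 fun w => ?_
  have h := measure_setOf_forall_apply_mem hd hP (node := fun _ : Unit => w)
    (fun _ _ _ => rfl) (S := fun _ => (simplexSet d)ᶜ)
    (fun _ => isClosed_simplexSet.measurableSet.compl)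
  simpa [sigmaMeas_compl_simplexSet, ae_iff] using h

def steepSet (δ : ℝ) (ω : Wd d) : Set (Wd d → Pt d) :=
  {x | ∀ b, x (ω ++ [b]) bᶜ ≤ δ}

noncomputable def steepProb (d : ℕ) (δ : ℝ) : ℝ≥0∞ :=
  ∏ b : Lam d, sigmaMeas d {p | p bᶜ ≤ δ}

lemma measurableSet_steepSet (δ : ℝ) (ω : Wd d) : MeasurableSet (steepSet δ ω) := by
  simp only [steepSet, Set.ofPred_forall]
  exact MeasurableSet.iInter fun b =>
    (measurableSet_coord_le bᶜ δ).preimage (measurable_pi_apply (ω ++ [b]))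

lemma append_singleton_injective (ω : Wd d) : Function.Injective fun b : Lam d => ω ++ [b] :=
  fun b b' h => by simpa using h

lemma measure_steepSet (hd : 1 ≤ d) (hP : HasIidSimplexCoords P) (δ : ℝ) (ω : Wd d) :
    P (steepSet δ ω) = steepProb d δ :=
  measure_setOf_forall_apply_mem hd hP (append_singleton_injective ω)
    fun b => measurableSet_coord_le bᶜ δ

lemma measure_steepSet_inter (hd : 1 ≤ d) (hP : HasIidSimplexCoords P)
    (δ : ℝ) {ω ω' : Wd d} (hω : ω ≠ ω') :
    P (steepSet δ ω ∩ steepSet δ ω') = steepProb d δ * steepProb d δ := by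
  have hnode : Function.Injective (Sum.elim (fun b : Lam d => ω ++ [b]) fun b => ω' ++ [b]) :=
    (append_singleton_injective ω).sumElim (append_singleton_injective ω')
      fun b b' h => hω (List.append_inj' h rfl).1
  have h := measure_setOf_forall_apply_mem hd hP hnode
    (S := Sum.elim (fun b => {p | p bᶜ ≤ δ}) fun b => {p | p bᶜ ≤ δ})
    (fun i => by cases i <;> exact measurableSet_coord_le _ δ)
  simp only [Fintype.prod_sum_type, Sum.elim_inl, Sum.elim_inr, Sum.forall] at h
  exact h

lemma measure_compl_iUnion_steepSet_le [IsProbabilityMeasure P] (hd : 1 ≤ d)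
    (hP : HasIidSimplexCoords P) (δ : ℝ) (ℓ : ℕ) :
    P (⋃ r : Fin ℓ → Lam d, steepSet δ (List.ofFn r))ᶜ ≤ (2 ^ (d * ℓ) * steepProb d δ)⁻¹ := by
  have hcard : (Fintype.card (Fin ℓ → Lam d) : ℝ≥0∞) = 2 ^ (d * ℓ) := by
    simp [pow_mul]
  rw [← hcard]
  exact measure_compl_iUnion_le_of_pairwise_indep (fun r => measurableSet_steepSet δ _)
    (fun r => measure_steepSet hd hP δ _)
    fun r r' h => measure_steepSet_inter hd hP δ (List.ofFn_injective.ne h)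

lemma exists_inv_two_pow_le_steepProb (hd : 1 ≤ d) :
    ∃ c : ℕ, ∀ n : ℕ, 2⁻¹ ^ ((c + (2 ^ d - 1) * n) * 2 ^ d) ≤ steepProb d ((2 : ℝ)⁻¹ ^ n) := by
  obtain ⟨c, hc⟩ := exists_inv_two_pow_mul_le_sigmaMeas hd
  refine ⟨c, fun n => ?_⟩
  have hδ : ENNReal.ofReal ((2 : ℝ)⁻¹ ^ n) = 2⁻¹ ^ n := by
    rw [ENNReal.ofReal_pow (by norm_num), ENNReal.ofReal_inv_of_pos two_pos, ENNReal.ofReal_ofNat]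
  calc (2⁻¹ : ℝ≥0∞) ^ ((c + (2 ^ d - 1) * n) * 2 ^ d)
      = ∏ _b : Lam d, 2⁻¹ ^ c * ENNReal.ofReal ((2 : ℝ)⁻¹ ^ n) ^ (2 ^ d - 1) := by
        rw [Finset.prod_const, Finset.card_univ, Fintype.card_fun, Fintype.card_bool,
          Fintype.card_fin, hδ, ← pow_mul, ← pow_add, ← pow_mul, mul_comm n]
    _ ≤ steepProb d ((2 : ℝ)⁻¹ ^ n) :=
        Finset.prod_le_prod' fun b _ => hc bᶜ (pow_le_one₀ (by norm_num) (by norm_num))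

/-- The depth is chosen so that the `2^{dℓ}` candidate nodes, each steep with probability at
least `2^{-2ᵈ (c + (2ᵈ - 1) n)}`, number at least `2ᵐ` over that probability. -/
lemma exists_measure_compl_iUnion_steepSet_le [IsProbabilityMeasure P] (hd : 1 ≤ d)
    (hP : HasIidSimplexCoords P) :
    ∃ c : ℕ, ∀ n m : ℕ,
      P (⋃ r : Fin (2 ^ d * (c + (2 ^ d - 1) * n) + m) → Lam d,
        steepSet ((2 : ℝ)⁻¹ ^ n) (List.ofFn r))ᶜ ≤ 2⁻¹ ^ m := by
  obtain ⟨c, hc⟩ := exists_inv_two_pow_le_steepProb hd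
  refine ⟨c, fun n m => (measure_compl_iUnion_steepSet_le hd hP _ _).trans ?_⟩
  set s := 2 ^ d * (c + (2 ^ d - 1) * n)
  rw [← ENNReal.inv_pow]
  refine ENNReal.inv_le_inv.2 ?_
  calc (2 : ℝ≥0∞) ^ m = 2 ^ (s + m) * 2⁻¹ ^ s := by
        rw [pow_add, mul_right_comm, ← mul_pow, ENNReal.mul_inv_cancel two_ne_zero
          ENNReal.ofNat_ne_top, one_pow, one_mul]
    _ ≤ 2 ^ (d * (s + m)) * steepProb d ((2 : ℝ)⁻¹ ^ n) := by
        gcongr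
        · exact one_le_two
        · exact Nat.le_mul_of_pos_left _ hd
        · simpa [s, mul_comm] using hc n

lemma ae_eventually_exists_steepSet [IsProbabilityMeasure P] (hd : 1 ≤ d)
    (hP : HasIidSimplexCoords P) (K : ℕ) :
    ∃ j : ℕ, ∀ᵐ x ∂P, ∀ᶠ m in atTop, ∃ ω : Wd d, m ≤ ω.length ∧ ω.length ≤ j * (m + 1) ∧
      x ∈ steepSet ((2 : ℝ)⁻¹ ^ (K * m)) ω := by
  obtain ⟨c, hc⟩ := exists_measure_compl_iUnion_steepSet_le hd hP
  refine ⟨2 ^ d * (c + (2 ^ d - 1) * K) + 1, ?_⟩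
  have hsum : ∑' m, P (⋃ r : Fin (2 ^ d * (c + (2 ^ d - 1) * (K * m)) + m) → Lam d,
      steepSet ((2 : ℝ)⁻¹ ^ (K * m)) (List.ofFn r))ᶜ ≠ ⊤ :=
    ne_top_of_le_ne_top (by simp [ENNReal.tsum_geometric, ENNReal.one_sub_inv_two])
      (ENNReal.tsum_le_tsum fun m => hc (K * m) m)
  filter_upwards [ae_eventually_notMem hsum] with x hx
  filter_upwards [hx] with m hm
  obtain ⟨r, hr⟩ := Set.mem_iUnion.1 (not_not.1 hm)
  refine ⟨List.ofFn r, ?_, ?_, hr⟩ <;> rw [List.length_ofFn]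
  · omega
  · generalize 2 ^ d = A, 2 ^ d - 1 = B
    nlinarith [Nat.zero_le (A * c * m), Nat.zero_le (A * B * K)]

end RandomTree

section Labels

variable {d : ℕ} {x : Wd d → Pt d}

lemma labelFrom_append (x : Wd d → Pt d) (u : Wd d) : ∀ pre v,
    labelFrom d x pre (u ++ v) = labelFrom d x pre u * labelFrom d x (pre ++ u) v := by
  induction u with
  | nil => simp [labelFrom]
  | cons a u ih =>
    intro pre v
    simp [labelFrom, ih, mul_assoc]

lemma label_append (x : Wd d → Pt d) (ω w : Wd d) :
    label d x (ω ++ w) = label d x ω * labelFrom d x ω w := by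
  simp [label, labelFrom_append]

lemma labelFrom_mem_Icc (hx : ∀ w, x w ∈ simplexSet d) (w : Wd d) :
    ∀ pre, labelFrom d x pre w ∈ Set.Icc 0 1 := by
  induction w with
  | nil => simp [labelFrom]
  | cons a w ih =>
    intro pre
    exact ⟨mul_nonneg ((hx pre).1 a) (ih _).1,
      mul_le_one₀ (apply_le_one_of_mem_simplexSet (hx pre) a) (ih _).1 (ih _).2⟩

lemma labelFrom_cons_cons_le (hx : ∀ w, x w ∈ simplexSet d) (pre : Wd d) (b a : Lam d)
    (w : Wd d) : labelFrom d x pre (b :: a :: w) ≤ x (pre ++ [b]) a := by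
  simp only [labelFrom]
  calc x pre b * (x (pre ++ [b]) a * labelFrom d x (pre ++ [b] ++ [a]) w)
      ≤ 1 * (x (pre ++ [b]) a * 1) := by
        gcongr
        · exact mul_nonneg ((hx _).1 a) (labelFrom_mem_Icc hx w _).1
        · exact apply_le_one_of_mem_simplexSet (hx pre) b
        · exact (hx _).1 a
        · exact (labelFrom_mem_Icc hx w _).2
    _ = x (pre ++ [b]) a := by ring

lemma ofReal_inv_le_ratio (hx : ∀ w, x w ∈ simplexSet d) {ω w : Wd d} {δ : ℝ}
    (h : labelFrom d x ω w ≤ δ) : ENNReal.ofReal δ⁻¹ ≤ ratio d x ω w := by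
  rw [ratio, label_append]
  split_ifs with h0
  · exact le_top
  · obtain ⟨hω, hw⟩ := mul_ne_zero_iff.1 h0
    rw [div_mul_cancel_left₀ hω]
    exact ENNReal.ofReal_le_ofReal
      (inv_anti₀ (lt_of_le_of_ne (labelFrom_mem_Icc hx w ω).1 (Ne.symm hw)) h)

lemma IsCentral.exists_eq_cons_cons {w : Wd d} (hc : IsCentral d w) (hw : 2 ≤ w.length) :
    ∃ b t, w = b :: bᶜ :: t := by
  obtain _ | ⟨b, _ | ⟨a, t⟩⟩ := w
  · simp at hw
  · simp at hw
  refine ⟨b, t, ?_⟩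
  congr
  funext i
  obtain ⟨c, hc⟩ := hc i
  simp only [List.map_cons, List.length_cons, Nat.add_sub_cancel, List.replicate_succ,
    List.cons.injEq] at hc
  simp [hc.2.1, ← hc.1]

lemma le_HmPhi {Φ : ℝ → ℝ} {m : ℕ} {ω : Wd d}
    (hω : 1 ≤ ω.length ∧
      ((2 : ℝ) ^ (-(ω.length : ℝ))) ^ (-Φ ((2 : ℝ) ^ (-(ω.length : ℝ)))) < (2 : ℝ) ^ m)
    {v : ℝ≥0∞} (hv : ∀ w : Wd d, w.length = m → IsCentral d w → v ≤ ratio d x ω w) :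
    v ≤ HmPhi d x Φ m :=
  le_sup_of_le_right <| le_iSup₂_of_le ω hω <| le_iInf₂ fun w hw => hv w hw.1 hw.2

lemma ofReal_inv_le_HmPhi_of_mem_steepSet (hx : ∀ w, x w ∈ simplexSet d) {Φ : ℝ → ℝ}
    {m : ℕ} (hm : 2 ≤ m) {ω : Wd d}
    (hω : 1 ≤ ω.length ∧
      ((2 : ℝ) ^ (-(ω.length : ℝ))) ^ (-Φ ((2 : ℝ) ^ (-(ω.length : ℝ)))) < (2 : ℝ) ^ m)
    {δ : ℝ} (hsteep : x ∈ steepSet δ ω) : ENNReal.ofReal δ⁻¹ ≤ HmPhi d x Φ m := by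
  refine le_HmPhi hω fun w hlen hc => ofReal_inv_le_ratio hx ?_
  obtain ⟨b, t, rfl⟩ := hc.exists_eq_cons_cons (hlen ▸ hm)
  exact (labelFrom_cons_cons_le hx ω b bᶜ t).trans (hsteep b)

lemma le_log2_div {H : ℝ≥0∞} {K m : ℕ} (hm : m ≠ 0) (h : ENNReal.ofReal (2 ^ (K * m)) ≤ H) :
    (K : ℝ≥0∞) ≤ log2 H / m := by
  rw [log2]
  split_ifs with htop
  · simp [ENNReal.top_div_of_ne_top (ENNReal.natCast_ne_top m)]
  rw [ENNReal.le_div_iff_mul_le (.inl (by exact_mod_cast hm)) (.inl (ENNReal.natCast_ne_top m)),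
    ← Nat.cast_mul, ← ENNReal.ofReal_natCast]
  refine ENNReal.ofReal_le_ofReal ?_
  have h2 : (2 : ℝ) ^ (K * m) ≤ H.toReal := by
    simpa [ENNReal.toReal_ofReal (by positivity : (0 : ℝ) ≤ 2 ^ (K * m))] using
      ENNReal.toReal_mono htop h
  calc ((K * m : ℕ) : ℝ) = Real.logb 2 (2 ^ (K * m)) := by
        rw [Real.logb_pow, Real.logb_self_eq_one one_lt_two, mul_one, Nat.cast_mul]
    _ ≤ Real.logb 2 H.toReal := Real.logb_le_logb_of_le one_lt_two (by positivity) h2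

end Labels

section Exponent

variable {Φ : ℝ → ℝ}

lemma tendsto_two_rpow_neg_natCast :
    Tendsto (fun ℓ : ℕ => (2 : ℝ) ^ (-(ℓ : ℝ))) atTop (𝓝[Set.Ioo 0 1] 0) := by
  have h : (fun ℓ : ℕ => (2 : ℝ) ^ (-(ℓ : ℝ))) = fun ℓ => ((2 : ℝ) ^ ℓ)⁻¹ := by
    ext ℓ
    rw [Real.rpow_neg zero_le_two, Real.rpow_natCast]
  rw [h]
  refine tendsto_nhdsWithin_iff.2 ⟨tendsto_inv_atTop_zero.comp
    (tendsto_pow_atTop_atTop_of_one_lt one_lt_two), ?_⟩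
  filter_upwards [eventually_ge_atTop 1] with ℓ hℓ
  exact ⟨by positivity, inv_lt_one_of_one_lt₀ (one_lt_pow₀ one_lt_two (by omega))⟩

lemma eventually_lt_of_limsup_eq_zero
    (hΦ0 : limsup (fun t => ENNReal.ofReal (Φ t)) (𝓝[Set.Ioo (0 : ℝ) 1] 0) = 0)
    {ε : ℝ} (hε : 0 < ε) : ∀ᶠ ℓ : ℕ in atTop, Φ ((2 : ℝ) ^ (-(ℓ : ℝ))) < ε := by
  have h : ∀ᶠ t in 𝓝[Set.Ioo (0 : ℝ) 1] 0, ENNReal.ofReal (Φ t) < ENNReal.ofReal ε :=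
    eventually_lt_of_limsup_lt (hΦ0 ▸ ENNReal.ofReal_pos.2 hε)
  exact (tendsto_two_rpow_neg_natCast.eventually h).mono fun ℓ hℓ =>
    (ENNReal.ofReal_lt_ofReal_iff hε).1 hℓ

lemma eventually_rpow_lt_two_pow
    (hΦ0 : limsup (fun t => ENNReal.ofReal (Φ t)) (𝓝[Set.Ioo (0 : ℝ) 1] 0) = 0) (j : ℕ) :
    ∀ᶠ m : ℕ in atTop, ∀ ℓ : ℕ, m ≤ ℓ → ℓ ≤ j * (m + 1) →
      ((2 : ℝ) ^ (-(ℓ : ℝ))) ^ (-Φ ((2 : ℝ) ^ (-(ℓ : ℝ)))) < 2 ^ m := by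
  obtain ⟨M, hM⟩ := eventually_atTop.1
    (eventually_lt_of_limsup_eq_zero hΦ0 (ε := 1 / (2 * j + 2)) (by positivity))
  filter_upwards [eventually_ge_atTop (max M 1)] with m hm ℓ hmℓ hℓj
  rw [← Real.rpow_mul zero_le_two, ← Real.rpow_natCast 2 m,
    Real.rpow_lt_rpow_left_iff one_lt_two]
  have hm1 : (1 : ℝ) ≤ m := by exact_mod_cast (le_max_right M 1).trans hm
  have hℓ : (0 : ℝ) < ℓ := by exact_mod_cast (by omega : 0 < ℓ)
  have hℓj' : (ℓ : ℝ) ≤ j * (m + 1) := by exact_mod_cast hℓj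
  calc -(ℓ : ℝ) * -Φ ((2 : ℝ) ^ (-(ℓ : ℝ))) = ℓ * Φ ((2 : ℝ) ^ (-(ℓ : ℝ))) := by ring
    _ < ℓ * (1 / (2 * j + 2)) := mul_lt_mul_of_pos_left (hM ℓ (by omega)) hℓ
    _ ≤ j * (m + 1) * (1 / (2 * j + 2)) := by gcongr
    _ ≤ m := by
        rw [mul_one_div, div_le_iff₀ (by positivity)]
        nlinarith

end Exponent

theorem stmt16_general (d : ℕ) (hd : 1 ≤ d) (P : Measure (Wd d → Pt d)) [IsProbabilityMeasure P]
    (hP : ∀ F : Finset (Wd d),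
      P.map (fun x (w : F) => x (w : Wd d)) = Measure.pi fun _ : F => sigmaMeas d)
    (Φ : ℝ → ℝ)
    (hΦ0 : Filter.limsup (fun t => ENNReal.ofReal (Φ t)) (nhdsWithin 0 (Set.Ioo (0:ℝ) 1)) = 0) :
    P {x : Wd d → Pt d |
        Filter.limsup (fun m : ℕ => log2 (HmPhi d x Φ m) / (m : ℝ≥0∞)) Filter.atTop < ⊤} = 0 ∧
    ∀ᵐ x ∂P,
      Filter.limsup (fun m : ℕ => log2 (HmPhi d x Φ m) / (m : ℝ≥0∞)) Filter.atTop = ⊤ := by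
  have hae : ∀ᵐ x ∂P, limsup (fun m : ℕ => log2 (HmPhi d x Φ m) / (m : ℝ≥0∞)) atTop = ⊤ := by
    choose j hj using ae_eventually_exists_steepSet hd hP
    filter_upwards [ae_mem_simplexSet hd hP, ae_all_iff.2 hj] with x hx hsteep
    refine top_unique (ENNReal.iSup_natCast ▸ iSup_le fun K => ?_)
    refine le_limsup_of_frequently_le (Eventually.frequently ?_)
    filter_upwards [hsteep K, eventually_rpow_lt_two_pow hΦ0 (j K), eventually_ge_atTop 2]
      with m ⟨ω, hmω, hωj, hω⟩ hφ hm
    refine le_log2_div (by omega) ?_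
    simpa using ofReal_inv_le_HmPhi_of_mem_steepSet hx hm ⟨by omega, hφ _ hmω hωj⟩ hω
  exact ⟨measure_mono_null (fun x hx => hx.ne) (ae_iff.1 hae), hae⟩

/-- If `φ(x) = x^{−Φ(x)}` is nonincreasing and left-continuous on `(0,1)`
and `limsup_{x→0+} Φ(x) = 0`, then `ℙ(limsup_m (log₂ H_{m,Φ})/m < ∞) = 0`; that is, for
`ℙ`-a.e. `x`, `limsup_m (log₂ H_{m,Φ}(x))/m = ∞`. -/
theorem stmt16 (d : ℕ) (hd : 1 ≤ d) (P : Measure (Wd d → Pt d)) [IsProbabilityMeasure P]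
    (hP : ∀ F : Finset (Wd d),
      P.map (fun x (w : F) => x (w : Wd d)) = Measure.pi fun _ : F => sigmaMeas d)
    (Φ : ℝ → ℝ) (hΦpos : ∀ t ∈ Set.Ioo (0 : ℝ) 1, 0 < Φ t)
    (hmono : ∀ t₁ ∈ Set.Ioo (0 : ℝ) 1, ∀ t₂ ∈ Set.Ioo (0 : ℝ) 1, t₁ ≤ t₂ →
      t₂ ^ (-Φ t₂) ≤ t₁ ^ (-Φ t₁))
    (hlc : ∀ t ∈ Set.Ioo (0 : ℝ) 1, Filter.Tendsto (fun u : ℝ => u ^ (-Φ u))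
      (nhdsWithin t (Set.Ioo 0 t)) (nhds (t ^ (-Φ t))))
    (hΦ0 : Filter.limsup (fun t => ENNReal.ofReal (Φ t)) (nhdsWithin 0 (Set.Ioo (0:ℝ) 1)) = 0) :
    P {x : Wd d → Pt d |
        Filter.limsup (fun m : ℕ => log2 (HmPhi d x Φ m) / (m : ℝ≥0∞)) Filter.atTop < ⊤} = 0 ∧
    ∀ᵐ x ∂P,
      Filter.limsup (fun m : ℕ => log2 (HmPhi d x Φ m) / (m : ℝ≥0∞)) Filter.atTop = ⊤ :=
  stmt16_general d hd P hP Φ hΦ0
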